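/- The definite integral ∫₀^{∞} ( y ρ(y)² + 5 ρ(y) ρ'(y) ) dy equals 6 ln 2 − 57/8. -/

import Mathlib

/-!
In the variable `t = e^{-y}` the profile is the rational function `ρ = 6t/(1+t)²`, so `yρ²` has an
elementary primitive, `ρ - 6 log(1+t) - 6y t²(3+t)/(1+t)³`, which vanishes at infinity because
`y e^{-y} → 0`; the second summand `5ρρ'` is the derivative of `(5/2)ρ²`. On `(0, ∞)` both summands
have a constant sign, which makes them integrable, and the primitives at `0` give the value.
-/

open Real MeasureTheory

/-- The spike profile `ρ(y) = (3/2) sech²(y/2)`. -/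
noncomputable def rho (y : ℝ) : ℝ := (3/2) * (1 / Real.cosh (y/2))^2

open Filter Topology Set

lemma rho_eq_exp_neg (y : ℝ) : rho y = 6 * exp (-y) / (1 + exp (-y)) ^ 2 := by
  have hu : exp (-y) = exp (-(y / 2)) ^ 2 := by rw [← exp_nat_mul]; ring_nf
  have hv : exp (y / 2) = (exp (-(y / 2)))⁻¹ := by rw [exp_neg, inv_inv]
  have hpos : 0 < exp (-(y / 2)) := exp_pos _
  rw [rho, cosh_eq, hu, hv]
  field_simp
  ring

lemma rho_nonneg (y : ℝ) : 0 ≤ rho y := by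
  rw [rho]
  positivity

lemma rho_zero : rho 0 = 3 / 2 := by
  simp [rho]

lemma hasDerivAt_exp_neg (y : ℝ) : HasDerivAt (fun y => exp (-y)) (-exp (-y)) y := by
  simpa using (hasDerivAt_neg y).exp

lemma hasDerivAt_rho (y : ℝ) :
    HasDerivAt rho (-6 * exp (-y) * (1 - exp (-y)) / (1 + exp (-y)) ^ 3) y := by
  have ht := hasDerivAt_exp_neg y
  rw [funext rho_eq_exp_neg]
  refine ((ht.const_mul 6).fun_div ((ht.const_add 1).fun_pow 2) (by positivity)).congr_deriv ?_
  field_simp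
  ring

lemma deriv_rho_nonpos {y : ℝ} (hy : 0 ≤ y) : deriv rho y ≤ 0 := by
  have ht : 0 ≤ 1 - exp (-y) := sub_nonneg.2 (exp_le_one_iff.2 (neg_nonpos.2 hy))
  rw [(hasDerivAt_rho y).deriv, neg_mul, neg_mul, neg_div, neg_nonpos]
  exact div_nonneg (mul_nonneg (by positivity) ht) (by positivity)

lemma tendsto_rho_atTop : Tendsto rho atTop (𝓝 0) := by
  have ht := tendsto_exp_neg_atTop_nhds_zero
  have := (ht.const_mul 6).div ((ht.const_add 1).pow 2) (by norm_num)
  simp only [mul_zero, add_zero, zero_div] at this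
  exact this.congr fun y => (rho_eq_exp_neg y).symm

noncomputable def mulRhoSqPrimitive (y : ℝ) : ℝ :=
  rho y - 6 * log (1 + exp (-y)) - 6 * y * exp (-y) ^ 2 * (3 + exp (-y)) / (1 + exp (-y)) ^ 3

lemma mulRhoSqPrimitive_zero : mulRhoSqPrimitive 0 = 3 / 2 - 6 * log 2 := by
  norm_num [mulRhoSqPrimitive, rho_zero]

lemma hasDerivAt_mulRhoSqPrimitive (y : ℝ) :
    HasDerivAt mulRhoSqPrimitive (y * rho y ^ 2) y := by
  have ht := hasDerivAt_exp_neg y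
  have hlog := ((ht.const_add 1).log (by positivity)).const_mul 6
  have hfrac := ((((hasDerivAt_id' y).const_mul 6).fun_mul (ht.fun_pow 2)).fun_mul
    (ht.const_add 3)).fun_div ((ht.const_add 1).fun_pow 3) (by positivity)
  unfold mulRhoSqPrimitive
  refine (((hasDerivAt_rho y).fun_sub hlog).fun_sub hfrac).congr_deriv ?_
  rw [rho_eq_exp_neg]
  field_simp
  ring

lemma tendsto_mulRhoSqPrimitive_atTop : Tendsto mulRhoSqPrimitive atTop (𝓝 0) := by
  have ht := tendsto_exp_neg_atTop_nhds_zero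
  have hyt : Tendsto (fun y => y * exp (-y)) atTop (𝓝 0) := by
    simpa using tendsto_pow_mul_exp_neg_atTop_nhds_zero 1
  have hlog := ((ht.const_add 1).log (by norm_num)).const_mul 6
  have hfrac := ((hyt.const_mul 6).mul ((ht.mul (ht.const_add 3)).div
    ((ht.const_add 1).pow 3) (by norm_num)))
  have := (tendsto_rho_atTop.sub hlog).sub hfrac
  simp only [add_zero, log_one, mul_zero, zero_mul, zero_div, sub_zero] at this
  refine this.congr fun y => ?_
  rw [mulRhoSqPrimitive, Pi.div_apply]
  ring

lemma hasDerivAt_half_rho_sq (y : ℝ) :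
    HasDerivAt (fun y => rho y ^ 2 / 2) (rho y * deriv rho y) y := by
  refine (((hasDerivAt_rho y).differentiableAt.hasDerivAt.fun_pow 2).div_const 2).congr_deriv ?_
  ring

lemma integrableOn_mul_rho_sq : IntegrableOn (fun y => y * rho y ^ 2) (Ioi 0) :=
  integrableOn_Ioi_deriv_of_nonneg' (fun y _ => hasDerivAt_mulRhoSqPrimitive y)
    (fun _ hy => mul_nonneg hy.out.le (sq_nonneg _)) tendsto_mulRhoSqPrimitive_atTop

lemma integral_mul_rho_sq : ∫ y in Ioi 0, y * rho y ^ 2 = 6 * log 2 - 3 / 2 := by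
  rw [integral_Ioi_of_hasDerivAt_of_tendsto' (fun y _ => hasDerivAt_mulRhoSqPrimitive y)
    integrableOn_mul_rho_sq tendsto_mulRhoSqPrimitive_atTop, mulRhoSqPrimitive_zero]
  ring

lemma tendsto_half_rho_sq_atTop : Tendsto (fun y => rho y ^ 2 / 2) atTop (𝓝 0) := by
  have := (tendsto_rho_atTop.pow 2).div_const 2
  rwa [zero_pow two_ne_zero, zero_div] at this

lemma integrableOn_rho_mul_deriv_rho : IntegrableOn (fun y => rho y * deriv rho y) (Ioi 0) :=
  integrableOn_Ioi_deriv_of_nonpos' (fun y _ => hasDerivAt_half_rho_sq y)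
    (fun y hy => mul_nonpos_of_nonneg_of_nonpos (rho_nonneg y) (deriv_rho_nonpos hy.out.le))
    tendsto_half_rho_sq_atTop

lemma integral_rho_mul_deriv_rho : ∫ y in Ioi 0, rho y * deriv rho y = -9 / 8 := by
  rw [integral_Ioi_of_hasDerivAt_of_tendsto' (fun y _ => hasDerivAt_half_rho_sq y)
    integrableOn_rho_mul_deriv_rho tendsto_half_rho_sq_atTop, rho_zero]
  norm_num

/-- The definite integral `∫₀^∞ ( yρ² + 5ρρ' ) dy = 6 ln 2 − 57/8`. -/
theorem stmt_17 :
    (∫ y in Set.Ioi (0 : ℝ), (y * (rho y)^2 + 5 * rho y * deriv rho y))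
      = 6 * Real.log 2 - 57/8 := by
  simp_rw [mul_assoc (5 : ℝ)]
  rw [integral_add integrableOn_mul_rho_sq (integrableOn_rho_mul_deriv_rho.const_mul 5),
    integral_const_mul, integral_mul_rho_sq, integral_rho_mul_deriv_rho]
  ring
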